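/- arXiv:1610.02382 — 5 statements merged into one kernel-verified Lean document; each statement's English description precedes it below -/
import Mathlib

section
/- (Oppenheim-type rank inequality) If A and B are N×N positive semidefinite complex matrices and all diagonal entries of A are positive, then rank(A · B) ≥ rank(B), where · is the Schur product. -/
open scoped ComplexOrder

/-!
Write `A = Cᴴ * C`. For `x` in the kernel of `A ⊙ B` the quadratic form `x⋆ (A ⊙ B) x` splits as
`∑ₖ (Cₖ * x)⋆ B (Cₖ * x)`, with `Cₖ` the `k`-th row of `C`, so `B` kills every `Cₖ * x` and hence
`w * x` for every `w` in the row space of `C`. As `A i i = ‖column i of C‖² ≠ 0`, a generic `w` in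
that row space has no zero entry, and then `x ↦ w * x` embeds `ker (A ⊙ B)` into `ker B`.
-/

theorem LinearMap.exists_forall_apply_ne_zero {K V W ι : Type*} [DivisionRing K] [Infinite K]
    [AddCommGroup V] [Module K V] [AddCommGroup W] [Module K W] [Finite ι]
    (f : ι → V →ₗ[K] W) (hf : ∀ i, f i ≠ 0) : ∃ v, ∀ i, f i v ≠ 0 := by
  by_contra! h
  have hcover : ⋃ i, (LinearMap.ker (f i) : Set V) = Set.univ :=
    Set.eq_univ_of_forall fun v => Set.mem_iUnion.mpr (h v)
  obtain ⟨i, hi⟩ := Subspace.exists_eq_top_of_iUnion_eq_univ hcover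
  exact hf i (LinearMap.ker_eq_top.mp hi)

namespace Matrix

variable {m n 𝕜 : Type*} [Fintype n]

theorem rank_le_rank_of_ker_mulVecLin_le {K m' : Type*} [Field K] {M : Matrix m n K}
    {M' : Matrix m' n K} (h : LinearMap.ker M.mulVecLin ≤ LinearMap.ker M'.mulVecLin) :
    M'.rank ≤ M.rank := by
  have hM := M.mulVecLin.finrank_range_add_finrank_ker
  have hM' := M'.mulVecLin.finrank_range_add_finrank_ker
  have hker := Submodule.finrank_mono h
  unfold rank
  omega

theorem star_dotProduct_conjTranspose_mul_self_hadamard_mulVec [Fintype m] [CommSemiring 𝕜]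
    [StarRing 𝕜] (C : Matrix m n 𝕜) (B : Matrix n n 𝕜) (x : n → 𝕜) :
    star x ⬝ᵥ (((Cᴴ * C) ⊙ B) *ᵥ x) = ∑ k, star (C k * x) ⬝ᵥ B *ᵥ (C k * x : n → 𝕜) := by
  simp only [dotProduct, mulVec, hadamard_apply, mul_apply, conjTranspose_apply, Pi.mul_apply,
    Pi.star_apply, star_mul', Finset.mul_sum, Finset.sum_mul]
  refine (Finset.sum_congr rfl fun a _ => ?_).trans Finset.sum_comm
  rw [Finset.sum_comm]
  refine Finset.sum_congr rfl fun k _ => Finset.sum_congr rfl fun b _ => ?_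
  ring

variable [RCLike 𝕜]

theorem PosSemidef.mulVec_mul_eq_zero_of_hadamard_mulVec_eq_zero [Fintype m] {B : Matrix n n 𝕜}
    (hB : B.PosSemidef) (C : Matrix m n 𝕜) {x : n → 𝕜} (hx : ((Cᴴ * C) ⊙ B) *ᵥ x = 0)
    (k : m) : B *ᵥ (C k * x) = 0 := by
  have hsum : ∑ k, star (C k * x) ⬝ᵥ B *ᵥ (C k * x) = 0 := by
    rw [← star_dotProduct_conjTranspose_mul_self_hadamard_mulVec, hx, dotProduct_zero]
  rw [← hB.dotProduct_mulVec_zero_iff]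
  exact (Finset.sum_eq_zero_iff_of_nonneg fun k _ => hB.dotProduct_mulVec_nonneg _).mp hsum k
    (Finset.mem_univ k)

theorem PosSemidef.ker_hadamard_le_ker_mul_diagonal_vecMul [Fintype m] [DecidableEq n]
    {B : Matrix n n 𝕜} (hB : B.PosSemidef) (C : Matrix m n 𝕜) (s : m → 𝕜) :
    LinearMap.ker ((Cᴴ * C) ⊙ B).mulVecLin ≤ LinearMap.ker (B * diagonal (s ᵥ* C)).mulVecLin := by
  intro x hx
  have hsx : (s ᵥ* C) * x = ∑ k, s k • (C k * x) := by
    ext j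
    simp only [vecMul, dotProduct, Pi.mul_apply, Finset.sum_apply, Pi.smul_apply, smul_eq_mul,
      Finset.sum_mul, mul_assoc]
  simp only [LinearMap.mem_ker, mulVecLin_apply] at hx ⊢
  rw [← mulVec_mulVec, show diagonal (s ᵥ* C) *ᵥ x = (s ᵥ* C) * x from
    funext (mulVec_diagonal _ _), hsx, mulVec_sum]
  simp only [mulVec_smul, hB.mulVec_mul_eq_zero_of_hadamard_mulVec_eq_zero C hx, smul_zero,
    Finset.sum_const_zero]

theorem PosSemidef.rank_le_rank_hadamard {A B : Matrix n n 𝕜} (hA : A.PosSemidef)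
    (hB : B.PosSemidef) (hdiag : ∀ i, A i i ≠ 0) : B.rank ≤ (A ⊙ B).rank := by
  classical
  obtain ⟨C, rfl⟩ : ∃ C : Matrix n n 𝕜, A = Cᴴ * C := by
    open scoped MatrixOrder in
    exact CStarAlgebra.nonneg_iff_eq_star_mul_self.mp hA.nonneg
  obtain ⟨s, hs⟩ : ∃ s : n → 𝕜, ∀ i, (s ᵥ* C) i ≠ 0 :=
    LinearMap.exists_forall_apply_ne_zero (fun i => (LinearMap.proj i).comp C.vecMulLinear)
      fun i hi => hdiag i (LinearMap.congr_fun hi (star fun k => C k i))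
  have hdet : IsUnit (diagonal (s ᵥ* C)).det := by
    simpa [det_diagonal, Finset.prod_ne_zero_iff] using hs
  calc B.rank = (B * diagonal (s ᵥ* C)).rank := (rank_mul_eq_left_of_isUnit_det _ _ hdet).symm
    _ ≤ ((Cᴴ * C) ⊙ B).rank :=
        rank_le_rank_of_ker_mulVecLin_le (hB.ker_hadamard_le_ker_mul_diagonal_vecMul C s)

end Matrix

/-- Oppenheim-type rank inequality: if `A`, `B` are positive semidefinite and the diagonal
entries of `A` are positive, then `rank (A · B) ≥ rank B` for the Schur product. -/
theorem schur_rank_ge {N : ℕ} (A B : Matrix (Fin N) (Fin N) ℂ)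
    (hA : A.PosSemidef) (hB : B.PosSemidef)
    (hdiag : ∀ i, 0 < (A i i).re) :
    B.rank ≤ (Matrix.hadamard A B).rank :=
  hA.rank_le_rank_hadamard hB fun i hi => by simpa [hi] using hdiag i
end

section
/- The function ψ(z¹, z²) = (z¹ + z² + 2 z¹z²)/(2 + z¹ + z²) is analytic on 𝔻², satisfies |ψ| < 1 on 𝔻², satisfies |ψ(z)| = 1 for z ∈ 𝕋² with 2 + z¹ + z² ≠ 0, and interpolates ψ(0,0) = 0, ψ(r,0) = r/(2+r), ψ(0,r) = r/(2+r) for r ∈ (0,1). -/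
/-!
Writing `s = ‖z¹‖`, `t = ‖z²‖`, one has the identity
`|2 + z¹ + z²|² - |z¹ + z² + 2z¹z²|² = 4 ((1 - s²t²) + Re z¹ (1 - t²) + Re z² (1 - s²))`.
On the torus the right-hand side vanishes, so `|ψ| = 1`. On the bidisk, `Re zⁱ ≥ -‖zⁱ‖` bounds it
below by `4 (1 - s)(1 - t)(1 - st) > 0`, which gives both `|ψ| < 1` and the nonvanishing of the
denominator, hence analyticity.
-/

namespace Psi

open Complex

def num (a b : ℂ) : ℂ := a + b + 2 * a * b

def den (a b : ℂ) : ℂ := 2 + a + b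

theorem normSq_den_sub_normSq_num (a b : ℂ) :
    normSq (den a b) - normSq (num a b) =
      4 * ((1 - normSq a * normSq b) + a.re * (1 - normSq b) + b.re * (1 - normSq a)) := by
  simp only [den, num, normSq_apply, add_re, add_im, mul_re, mul_im, re_ofNat, im_ofNat]
  ring

theorem normSq_num_lt_normSq_den {a b : ℂ} (ha : ‖a‖ < 1) (hb : ‖b‖ < 1) :
    normSq (num a b) < normSq (den a b) := by
  set s := ‖a‖
  set t := ‖b‖
  have hs : 0 ≤ s := norm_nonneg a
  have ht : 0 ≤ t := norm_nonneg b
  have hre_a : -s ≤ a.re := neg_le_of_abs_le (abs_re_le_norm a)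
  have hre_b : -t ≤ b.re := neg_le_of_abs_le (abs_re_le_norm b)
  have hfactor : 0 < (1 - s) * (1 - t) * (1 - s * t) := by
    have : s * t < 1 := by nlinarith
    apply mul_pos (mul_pos _ _) <;> linarith
  -- `(1 - s)(1 - t)(1 - st) = (1 - s²t²) - s (1 - t²) - t (1 - s²)`
  have hlower : (1 - s) * (1 - t) * (1 - s * t) ≤
      (1 - normSq a * normSq b) + a.re * (1 - normSq b) + b.re * (1 - normSq a) := by
    rw [← Complex.sq_norm a, ← Complex.sq_norm b]
    nlinarith [mul_le_mul_of_nonneg_right hre_a (by nlinarith : (0 : ℝ) ≤ 1 - t ^ 2),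
      mul_le_mul_of_nonneg_right hre_b (by nlinarith : (0 : ℝ) ≤ 1 - s ^ 2)]
  linarith [normSq_den_sub_normSq_num a b]

theorem den_ne_zero {a b : ℂ} (ha : ‖a‖ < 1) (hb : ‖b‖ < 1) : den a b ≠ 0 := by
  rw [← normSq_pos]
  exact (normSq_nonneg _).trans_lt (normSq_num_lt_normSq_den ha hb)

theorem norm_num_div_den_lt_one {a b : ℂ} (ha : ‖a‖ < 1) (hb : ‖b‖ < 1) :
    ‖num a b / den a b‖ < 1 := by
  rw [norm_div, div_lt_one (norm_pos_iff.mpr (den_ne_zero ha hb))]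
  exact lt_of_pow_lt_pow_left₀ 2 (norm_nonneg _) <| by
    simpa only [Complex.sq_norm] using normSq_num_lt_normSq_den ha hb

theorem norm_num_div_den_eq_one {a b : ℂ} (ha : ‖a‖ = 1) (hb : ‖b‖ = 1) (hden : den a b ≠ 0) :
    ‖num a b / den a b‖ = 1 := by
  have hna : normSq a = 1 := by rw [← Complex.sq_norm, ha, one_pow]
  have hnb : normSq b = 1 := by rw [← Complex.sq_norm, hb, one_pow]
  have h := normSq_den_sub_normSq_num a b
  rw [hna, hnb] at h
  rw [norm_div, div_eq_one_iff_eq (norm_ne_zero_iff.mpr hden), norm_def, norm_def]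
  congr 1
  linarith

theorem analyticAt_num_div_den {z : ℂ × ℂ} (hz : den z.1 z.2 ≠ 0) :
    AnalyticAt ℂ (fun z : ℂ × ℂ => num z.1 z.2 / den z.1 z.2) z :=
  ((analyticAt_fst.add analyticAt_snd).add
      ((analyticAt_const.mul analyticAt_fst).mul analyticAt_snd)).div
    ((analyticAt_const.add analyticAt_fst).add analyticAt_snd) hz

end Psi

open Psi in
/-- The function `ψ(z¹,z²) = (z¹ + z² + 2z¹z²)/(2 + z¹ + z²)` is analytic on the bidisk,
has modulus less than one there, modulus one on the torus off the denominator's zero set,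
and interpolates `(0,0) ↦ 0`, `(r,0) ↦ r/(2+r)`, `(0,r) ↦ r/(2+r)`. -/
theorem psi_inner_on_bidisk :
    AnalyticOnNhd ℂ (fun z : ℂ × ℂ => (z.1 + z.2 + 2 * z.1 * z.2) / (2 + z.1 + z.2))
      {z : ℂ × ℂ | ‖z.1‖ < 1 ∧ ‖z.2‖ < 1} ∧
    (∀ z : ℂ × ℂ, ‖z.1‖ < 1 → ‖z.2‖ < 1 →
      ‖(z.1 + z.2 + 2 * z.1 * z.2) / (2 + z.1 + z.2)‖ < 1) ∧
    (∀ z : ℂ × ℂ, ‖z.1‖ = 1 → ‖z.2‖ = 1 → 2 + z.1 + z.2 ≠ 0 →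
      ‖(z.1 + z.2 + 2 * z.1 * z.2) / (2 + z.1 + z.2)‖ = 1) ∧
    (∀ r : ℝ, 0 < r → r < 1 →
      ((0 : ℂ) + 0 + 2 * 0 * 0) / (2 + 0 + 0) = 0 ∧
      ((r : ℂ) + 0 + 2 * r * 0) / (2 + r + 0) = (r : ℂ) / (2 + r) ∧
      ((0 : ℂ) + r + 2 * 0 * r) / (2 + 0 + r) = (r : ℂ) / (2 + r)) := by
  refine ⟨fun z hz => analyticAt_num_div_den (den_ne_zero hz.1 hz.2), ?_, ?_, ?_⟩
  · exact fun z => norm_num_div_den_lt_one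
  · exact fun z => norm_num_div_den_eq_one
  · exact fun r _ _ => by simp
end

section
/- For r ∈ (0,1), with a₁ = b₁ = 1/√2 and a₂ = b₃ real, the system { (1/2)(1 − t²) = (1/2) a₂² (1 − r²) + (1 − a₂/√2)², (1/2)(1 − t²) = a₂(√2 − a₂) } has exactly two solutions with t > 0, namely (t, a₂) = (r/(2−r), √2/(2−r)) and (t, a₂) = (r/(2+r), √2/(2+r)). -/
set_option maxHeartbeats 1000000


/-- For `0 < r < 1`, the system
`(1/2)(1 − t²) = (1/2)a₂²(1 − r²) + (1 − a₂/√2)²` and `(1/2)(1 − t²) = a₂(√2 − a₂)`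
has, among `t > 0`, exactly the two solutions
`(t, a₂) = (r/(2−r), √2/(2−r))` and `(t, a₂) = (r/(2+r), √2/(2+r))`. -/
theorem symmetric_system_solutions (r : ℝ) (hr : 0 < r) (hr1 : r < 1) :
    ∀ t a₂ : ℝ, 0 < t →
      (((1/2) * (1 - t^2) = (1/2) * a₂^2 * (1 - r^2) + (1 - a₂ / Real.sqrt 2)^2 ∧
        (1/2) * (1 - t^2) = a₂ * (Real.sqrt 2 - a₂)) ↔
      ((t = r / (2 - r) ∧ a₂ = Real.sqrt 2 / (2 - r)) ∨
       (t = r / (2 + r) ∧ a₂ = Real.sqrt 2 / (2 + r)))) := by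
  intro t a₂ ht
  set s := Real.sqrt 2 with hs
  have hs0 : (0:ℝ) < s := Real.sqrt_pos.mpr (by norm_num)
  have hs2 : s ^ 2 = 2 := Real.sq_sqrt (by norm_num)
  have h2r : (0:ℝ) < 2 - r := by linarith
  have h2r' : (0:ℝ) < 2 + r := by linarith
  constructor
  · rintro ⟨h1, h2⟩
    have hdiv : a₂ / s = a₂ * s / 2 := by
      rw [div_eq_div_iff hs0.ne' (by norm_num)]
      nlinarith [hs2]
    rw [hdiv] at h1
    have key : ((2 - r) * a₂ - s) * ((2 + r) * a₂ - s) = 0 := by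
      nlinarith [hs2, h1, h2]
    rcases mul_eq_zero.mp key with h | h
    · left
      have ha : a₂ = s / (2 - r) := by
        field_simp
        linarith
      refine ⟨?_, ha⟩
      have ht2 : t ^ 2 = (r / (2 - r)) ^ 2 := by
        rw [ha] at h2
        field_simp at h2 ⊢
        nlinarith [hs2, h2]
      have hpos : (0:ℝ) < r / (2 - r) := div_pos hr h2r
      nlinarith [ht2, hpos, ht]
    · right
      have ha : a₂ = s / (2 + r) := by
        field_simp
        linarith
      refine ⟨?_, ha⟩
      have ht2 : t ^ 2 = (r / (2 + r)) ^ 2 := by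
        rw [ha] at h2
        field_simp at h2 ⊢
        nlinarith [hs2, h2]
      have hpos : (0:ℝ) < r / (2 + r) := div_pos hr h2r'
      nlinarith [ht2, hpos, ht]
  · rintro (⟨ht', ha⟩ | ⟨ht', ha⟩) <;> subst ht' <;> subst ha
    · constructor
      · field_simp
        linear_combination (-(2*(2 - r)^4*(1 - r^2)*s^2) + (32 - 64*r + 16*r^2 + 48*r^3 - 46*r^4 + 16*r^5 - 2*r^6)*s^2 + (r^2 - 1)) * hs2
      · field_simp
        linear_combination (-(2*(2 - r)^2*(1 - r)) + (6 - 14*r + 10*r^2 - 2*r^3)) * hs2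
    · constructor
      · field_simp
        linear_combination (-(2*(2 + r)^4*(1 - r^2)*s^2) + (32 + 64*r + 16*r^2 - 48*r^3 - 46*r^4 - 16*r^5 - 2*r^6)*s^2 + (r^2 - 1)) * hs2
      · field_simp
        linear_combination (-(2*(2 + r)^2*(1 + r)) + (6 + 14*r + 10*r^2 + 2*r^3)) * hs2
end

section
/- Let U = [[A, B],[C, D]] be a unitary operator on ℂ ⊕ ℂ², where A ∈ ℂ, B : ℂ² → ℂ, C : ℂ → ℂ², D : ℂ² → ℂ². For λ = (λ¹, λ²) ∈ 𝔻² let E_λ = diag(λ¹, λ²). Then I − D E_λ is invertible, and the function ψ(λ) = A + B E_λ (I − D E_λ)^{-1} C satisfies 1 − |ψ(λ)|² = ((I − D E_λ)^{-1} C)* (I − E_λ* E_λ) ((I − D E_λ)^{-1} C); in particular |ψ(λ)| < 1 for λ ∈ 𝔻² whenever (I − D E_λ)^{-1} C ≠ 0, and |ψ(λ)| ≤ 1 always. -/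
open Matrix

set_option maxHeartbeats 1600000 in

/-- Realization formula: if `U = [[A,B],[C,D]]` is unitary on `ℂ ⊕ ℂ²` and
`E_λ = diag(λ¹, λ²)` with `λ` in the bidisk, then `1 − D E_λ` is invertible and
`ψ(λ) = A + B E_λ (1 − D E_λ)⁻¹ C` satisfies
`1 − conj(ψ) ψ = ((1 − D E_λ)⁻¹ C)* (1 − E_λ* E_λ) ((1 − D E_λ)⁻¹ C)`;
in particular `|ψ| < 1` when `(1 − D E_λ)⁻¹ C ≠ 0`, and `|ψ| ≤ 1` always. -/
theorem realization_formula
    (A : Matrix (Fin 1) (Fin 1) ℂ) (B : Matrix (Fin 1) (Fin 2) ℂ)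
    (C : Matrix (Fin 2) (Fin 1) ℂ) (D : Matrix (Fin 2) (Fin 2) ℂ)
    (hU : Matrix.fromBlocks A B C D ∈ Matrix.unitaryGroup (Fin 1 ⊕ Fin 2) ℂ)
    (l1 l2 : ℂ) (h1 : ‖l1‖ < 1) (h2 : ‖l2‖ < 1) :
    IsUnit (1 - D * !![l1, 0; 0, l2]) ∧
    ∀ (E : Matrix (Fin 2) (Fin 2) ℂ) (F : Matrix (Fin 2) (Fin 1) ℂ) (ψ : ℂ),
      E = !![l1, 0; 0, l2] → F = (1 - D * E)⁻¹ * C →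
      ψ = A 0 0 + (B * E * F) 0 0 →
      ((1 : ℂ) - (starRingEnd ℂ) ψ * ψ = ((Fᴴ * (1 - Eᴴ * E) * F : Matrix (Fin 1) (Fin 1) ℂ) 0 0) ∧
       (F ≠ 0 → ‖ψ‖ < 1) ∧ ‖ψ‖ ≤ 1) := by
  -- block relations from unitarity
  have h : star (fromBlocks A B C D) * fromBlocks A B C D = 1 := hU.1
  rw [Matrix.star_eq_conjTranspose, fromBlocks_conjTranspose, fromBlocks_multiply,
    ← fromBlocks_one] at h
  have hBD : Bᴴ * B + Dᴴ * D = 1 := by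
    have := congrArg Matrix.toBlocks₂₂ h
    simpa only [Matrix.toBlocks_fromBlocks₂₂] using this
  have hAC : Aᴴ * A + Cᴴ * C = 1 := by
    have := congrArg Matrix.toBlocks₁₁ h
    simpa only [Matrix.toBlocks_fromBlocks₁₁] using this
  have hAB : Aᴴ * B + Cᴴ * D = 0 := by
    have := congrArg Matrix.toBlocks₁₂ h
    simpa only [Matrix.toBlocks_fromBlocks₁₂] using this
  have hBA : Bᴴ * A + Dᴴ * C = 0 := by
    have := congrArg Matrix.toBlocks₂₁ h
    simpa only [Matrix.toBlocks_fromBlocks₂₁] using this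
  -- scalar unitarity relations for the lower-right block
  have hsc : ∀ i j : Fin 2, (starRingEnd ℂ) (B 0 i) * B 0 j
      + ((starRingEnd ℂ) (D 0 i) * D 0 j + (starRingEnd ℂ) (D 1 i) * D 1 j)
      = if i = j then 1 else 0 := by
    intro i j
    have := congrFun (congrFun hBD i) j
    simpa [Matrix.mul_apply, Fin.sum_univ_two, Fin.sum_univ_one,
      Matrix.conjTranspose_apply, Matrix.one_apply] using this
  -- contraction property of D
  have hD : ∀ w : Fin 2 → ℂ,
      Complex.normSq (D 0 0 * w 0 + D 0 1 * w 1) + Complex.normSq (D 1 0 * w 0 + D 1 1 * w 1)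
      ≤ Complex.normSq (w 0) + Complex.normSq (w 1) := by
    intro w
    have key : (starRingEnd ℂ) (D 0 0 * w 0 + D 0 1 * w 1) * (D 0 0 * w 0 + D 0 1 * w 1)
        + (starRingEnd ℂ) (D 1 0 * w 0 + D 1 1 * w 1) * (D 1 0 * w 0 + D 1 1 * w 1)
        + (starRingEnd ℂ) (B 0 0 * w 0 + B 0 1 * w 1) * (B 0 0 * w 0 + B 0 1 * w 1)
        = (starRingEnd ℂ) (w 0) * w 0 + (starRingEnd ℂ) (w 1) * w 1 := by
      have h00 := hsc 0 0
      have h01 := hsc 0 1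
      have h10 := hsc 1 0
      have h11 := hsc 1 1
      norm_num at h00 h01 h10 h11
      simp only [map_add, _root_.map_mul]
      linear_combination ((starRingEnd ℂ) (w 0) * w 0) * h00
        + ((starRingEnd ℂ) (w 0) * w 1) * h01 + ((starRingEnd ℂ) (w 1) * w 0) * h10
        + ((starRingEnd ℂ) (w 1) * w 1) * h11
    have cast : ((Complex.normSq (D 0 0 * w 0 + D 0 1 * w 1)
        + Complex.normSq (D 1 0 * w 0 + D 1 1 * w 1)
        + Complex.normSq (B 0 0 * w 0 + B 0 1 * w 1) : ℝ) : ℂ)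
        = ((Complex.normSq (w 0) + Complex.normSq (w 1) : ℝ) : ℂ) := by
      push_cast
      simp only [Complex.normSq_eq_conj_mul_self]
      linear_combination key
    have := Complex.ofReal_inj.mp cast
    nlinarith [Complex.normSq_nonneg (B 0 0 * w 0 + B 0 1 * w 1)]
  have hl1 : Complex.normSq l1 < 1 := by
    have := Complex.sq_norm l1; nlinarith [norm_nonneg l1]
  have hl2 : Complex.normSq l2 < 1 := by
    have := Complex.sq_norm l2; nlinarith [norm_nonneg l2]
  -- invertibility
  have hunit : IsUnit (1 - D * !![l1, 0; 0, l2]) := by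
    rw [Matrix.isUnit_iff_isUnit_det, isUnit_iff_ne_zero]
    intro hdet
    obtain ⟨v, hv, hMv⟩ := Matrix.exists_mulVec_eq_zero_iff.mpr hdet
    have hveq : ∀ i, v i = (D * !![l1, 0; 0, l2]).mulVec v i := by
      intro i
      have := congrFun hMv i
      simp only [Matrix.sub_mulVec, Matrix.one_mulVec, Pi.sub_apply, Pi.zero_apply] at this
      linear_combination this
    set w : Fin 2 → ℂ := ![l1 * v 0, l2 * v 1] with hw
    have hDw : ∀ i, (D * !![l1, 0; 0, l2]).mulVec v i = D i 0 * w 0 + D i 1 * w 1 := by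
      intro i
      simp [Matrix.mulVec, Matrix.mul_apply, dotProduct, Fin.sum_univ_two, hw]
      ring
    have e0 : v 0 = D 0 0 * w 0 + D 0 1 * w 1 := by rw [hveq 0, hDw 0]
    have e1 : v 1 = D 1 0 * w 0 + D 1 1 * w 1 := by rw [hveq 1, hDw 1]
    have hle := hD w
    rw [← e0, ← e1] at hle
    have hw0 : Complex.normSq (w 0) = Complex.normSq l1 * Complex.normSq (v 0) := by
      simp [hw, Complex.normSq_mul]
    have hw1 : Complex.normSq (w 1) = Complex.normSq l2 * Complex.normSq (v 1) := by
      simp [hw, Complex.normSq_mul]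
    have hvne : v 0 ≠ 0 ∨ v 1 ≠ 0 := by
      by_contra hcon
      push_neg at hcon
      apply hv
      funext i
      fin_cases i
      · exact hcon.1
      · exact hcon.2
    rcases hvne with hne | hne
    · have : 0 < Complex.normSq (v 0) := Complex.normSq_pos.mpr hne
      nlinarith [Complex.normSq_nonneg (v 1), Complex.normSq_nonneg l2]
    · have : 0 < Complex.normSq (v 1) := Complex.normSq_pos.mpr hne
      nlinarith [Complex.normSq_nonneg (v 0), Complex.normSq_nonneg l1]
  refine ⟨hunit, ?_⟩
  intro E F ψ hE hF hψ
  -- C = (1 - D E) F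
  have hC : C = F - D * (E * F) := by
    have hdet : IsUnit (1 - D * E).det := by
      rw [hE]; exact (Matrix.isUnit_iff_isUnit_det _).mp hunit
    have : (1 - D * E) * F = C := by
      rw [hF, ← Matrix.mul_assoc, Matrix.mul_nonsing_inv _ hdet, Matrix.one_mul]
    rw [← this, Matrix.sub_mul, Matrix.one_mul, Matrix.mul_assoc]
  -- the key matrix identity
  have key : (1 : Matrix (Fin 1) (Fin 1) ℂ) - (A + B * E * F)ᴴ * (A + B * E * F)
      = Fᴴ * (1 - Eᴴ * E) * F := by
    have expand : ((1 : Matrix (Fin 1) (Fin 1) ℂ) - (A + B * E * F)ᴴ * (A + B * E * F))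
        - Fᴴ * (1 - Eᴴ * E) * F
        = -(Aᴴ * A + Cᴴ * C - 1) - (Aᴴ * B + Cᴴ * D) * (E * F)
          - (Fᴴ * Eᴴ) * (Bᴴ * A + Dᴴ * C)
          - (Fᴴ * Eᴴ) * ((Bᴴ * B + Dᴴ * D) - 1) * (E * F) := by
      rw [hC]
      simp only [conjTranspose_add, conjTranspose_mul, conjTranspose_sub, conjTranspose_one,
        Matrix.mul_add, Matrix.add_mul, Matrix.mul_sub, Matrix.sub_mul, Matrix.mul_one,
        Matrix.one_mul, Matrix.mul_assoc]
      abel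
    rw [hAC, hAB, hBA, hBD] at expand
    simp only [sub_self, neg_zero, Matrix.zero_mul, Matrix.mul_zero, sub_zero, zero_sub,
      neg_neg, zero_add, add_zero] at expand
    exact sub_eq_zero.mp expand
  -- entry form of the key identity
  have hX : ((A + B * E * F)ᴴ * (A + B * E * F)) 0 0 = (starRingEnd ℂ) ψ * ψ := by
    rw [Matrix.mul_apply, Fin.sum_univ_one, Matrix.conjTranspose_apply, Matrix.add_apply, ← hψ]
    rfl
  have keyE : (1 : ℂ) - (starRingEnd ℂ) ψ * ψ
      = ((Fᴴ * (1 - Eᴴ * E) * F : Matrix (Fin 1) (Fin 1) ℂ) 0 0) := by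
    have h0 := congrFun (congrFun key 0) 0
    rw [Matrix.sub_apply, Matrix.one_apply_eq, hX] at h0
    exact h0
  have hentry : ((Fᴴ * (1 - Eᴴ * E) * F : Matrix (Fin 1) (Fin 1) ℂ) 0 0)
      = (starRingEnd ℂ) (F 0 0) * (1 - (starRingEnd ℂ) l1 * l1) * F 0 0
        + (starRingEnd ℂ) (F 1 0) * (1 - (starRingEnd ℂ) l2 * l2) * F 1 0 := by
    subst hE
    simp [Matrix.mul_apply, Fin.sum_univ_two, Fin.sum_univ_one, Matrix.conjTranspose_apply,
      Matrix.sub_apply, Matrix.one_apply]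
  have hreal : 1 - Complex.normSq ψ
      = (1 - Complex.normSq l1) * Complex.normSq (F 0 0)
        + (1 - Complex.normSq l2) * Complex.normSq (F 1 0) := by
    have hc : ((1 - Complex.normSq ψ : ℝ) : ℂ)
        = (((1 - Complex.normSq l1) * Complex.normSq (F 0 0)
          + (1 - Complex.normSq l2) * Complex.normSq (F 1 0) : ℝ) : ℂ) := by
      push_cast
      simp only [Complex.normSq_eq_conj_mul_self]
      rw [keyE, hentry]
      ring
    exact Complex.ofReal_inj.mp hc
  have habs : ‖ψ‖ ^ 2 = Complex.normSq ψ := Complex.sq_norm ψ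
  refine ⟨keyE, ?_, ?_⟩
  · intro hFne
    have hfne : F 0 0 ≠ 0 ∨ F 1 0 ≠ 0 := by
      by_contra hcon
      push_neg at hcon
      apply hFne
      ext i j
      fin_cases i <;> fin_cases j
      · exact hcon.1
      · exact hcon.2
    have hpos : 0 < (1 - Complex.normSq l1) * Complex.normSq (F 0 0)
        + (1 - Complex.normSq l2) * Complex.normSq (F 1 0) := by
      rcases hfne with hne | hne
      · have hp := Complex.normSq_pos.mpr hne
        have ha : 0 < (1 - Complex.normSq l1) * Complex.normSq (F 0 0) :=
          mul_pos (by linarith) hp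
        have hb : 0 ≤ (1 - Complex.normSq l2) * Complex.normSq (F 1 0) :=
          mul_nonneg (by linarith) (Complex.normSq_nonneg _)
        linarith
      · have hp := Complex.normSq_pos.mpr hne
        have ha : 0 ≤ (1 - Complex.normSq l1) * Complex.normSq (F 0 0) :=
          mul_nonneg (by linarith) (Complex.normSq_nonneg _)
        have hb : 0 < (1 - Complex.normSq l2) * Complex.normSq (F 1 0) :=
          mul_pos (by linarith) hp
        linarith
    have hlt : Complex.normSq ψ < 1 := by linarith
    nlinarith [norm_nonneg ψ, habs, hlt]
  · have ha : 0 ≤ (1 - Complex.normSq l1) * Complex.normSq (F 0 0) :=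
      mul_nonneg (by linarith) (Complex.normSq_nonneg _)
    have hb : 0 ≤ (1 - Complex.normSq l2) * Complex.normSq (F 1 0) :=
      mul_nonneg (by linarith) (Complex.normSq_nonneg _)
    have hle : Complex.normSq ψ ≤ 1 := by linarith
    nlinarith [norm_nonneg ψ, habs, hle]
end

section
/- A rational function of the form (c₁ + c₂z¹ + c₃z²)/(c₄ + c₅z¹ + c₆z²) that is inner on the bidisk (|φ| < 1 on 𝔻², |φ| = 1 on 𝕋² off the zero set of the denominator) must be a function of z¹ alone or of z² alone; i.e., after cancellation either c₂ = c₅ = 0 or c₃ = c₆ = 0. -/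
open Complex ComplexConjugate

lemma quad_eq_zero (a b c x y z : ℂ) (hxy : x ≠ y) (hxz : x ≠ z) (hyz : y ≠ z)
    (hx : a*x^2 + b*x + c = 0) (hy : a*y^2 + b*y + c = 0) (hz : a*z^2 + b*z + c = 0) :
    a = 0 ∧ b = 0 ∧ c = 0 := by
  have h1 : (x - y) * (a*(x+y) + b) = 0 := by linear_combination hx - hy
  have h2 : (x - z) * (a*(x+z) + b) = 0 := by linear_combination hx - hz
  have h1' : a*(x+y)+b = 0 := (mul_eq_zero.mp h1).resolve_left (sub_ne_zero.mpr hxy)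
  have h2' : a*(x+z)+b = 0 := (mul_eq_zero.mp h2).resolve_left (sub_ne_zero.mpr hxz)
  have h3 : a * (y - z) = 0 := by linear_combination h1' - h2'
  have ha : a = 0 := (mul_eq_zero.mp h3).resolve_right (sub_ne_zero.mpr hyz)
  have hb : b = 0 := by linear_combination h1' - (x+y)*ha
  have hc : c = 0 := by linear_combination hx - x^2*ha - x*hb
  exact ⟨ha, hb, hc⟩

lemma three_unit (good : ℂ → Prop) (h : ∀ z w : ℂ, ¬ good z → ¬ good w → z = w) :
    ∃ x y u : ℂ, ‖x‖ = 1 ∧ ‖y‖ = 1 ∧ ‖u‖ = 1 ∧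
      x ≠ y ∧ x ≠ u ∧ y ≠ u ∧ good x ∧ good y ∧ good u := by
  have d1 : (1:ℂ) ≠ -1 := by norm_num
  have d2 : (1:ℂ) ≠ I := by simp [Complex.ext_iff]
  have d3 : (1:ℂ) ≠ -I := by simp [Complex.ext_iff]
  have d4 : (-1:ℂ) ≠ I := by simp [Complex.ext_iff]
  have d5 : (-1:ℂ) ≠ -I := by simp [Complex.ext_iff]
  have d6 : (I:ℂ) ≠ -I := by norm_num [Complex.ext_iff]
  have a1 : ‖(1:ℂ)‖ = 1 := by simp
  have a2 : ‖(-1:ℂ)‖ = 1 := by simp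
  have a3 : ‖I‖ = 1 := by simp
  have a4 : ‖-I‖ = 1 := by simp
  by_cases h1 : good 1
  · by_cases h2 : good (-1)
    · by_cases h3 : good I
      · exact ⟨1, -1, I, a1, a2, a3, d1, d2, d4, h1, h2, h3⟩
      · have h4 : good (-I) := by
          by_contra h4; exact d6 (h _ _ h3 h4)
        exact ⟨1, -1, -I, a1, a2, a4, d1, d3, d5, h1, h2, h4⟩
    · have h3 : good I := by by_contra h3; exact d4 (h _ _ h2 h3)
      have h4 : good (-I) := by by_contra h4; exact d5 (h _ _ h2 h4)
      exact ⟨1, I, -I, a1, a3, a4, d2, d3, d6, h1, h3, h4⟩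
  · have h2 : good (-1) := by by_contra h2; exact d1 (h _ _ h1 h2)
    have h3 : good I := by by_contra h3; exact d2 (h _ _ h1 h3)
    have h4 : good (-I) := by by_contra h4; exact d3 (h _ _ h1 h4)
    exact ⟨-1, I, -I, a2, a3, a4, d4, d5, d6, h2, h3, h4⟩

/-- A degree-one rational function that is inner on the bidisk is a function of one of
the two coordinates alone: after cancellation either `c₂ = c₅ = 0` or `c₃ = c₆ = 0`. -/
theorem degree_one_inner_depends_on_one_variable (c₁ c₂ c₃ c₄ c₅ c₆ : ℂ)
    (hden : ∀ z : ℂ × ℂ, ‖z.1‖ < 1 → ‖z.2‖ < 1 →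
      c₄ + c₅ * z.1 + c₆ * z.2 ≠ 0)
    (hlt : ∀ z : ℂ × ℂ, ‖z.1‖ < 1 → ‖z.2‖ < 1 →
      ‖(c₁ + c₂ * z.1 + c₃ * z.2) / (c₄ + c₅ * z.1 + c₆ * z.2)‖ < 1)
    (hbd : ∀ z : ℂ × ℂ, ‖z.1‖ = 1 → ‖z.2‖ = 1 →
      c₄ + c₅ * z.1 + c₆ * z.2 ≠ 0 →
      ‖(c₁ + c₂ * z.1 + c₃ * z.2) / (c₄ + c₅ * z.1 + c₆ * z.2)‖ = 1) :
    ∃ d₁ d₂ d₃ d₄ d₅ d₆ : ℂ,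
      (∀ z : ℂ × ℂ, ‖z.1‖ < 1 → ‖z.2‖ < 1 →
        d₄ + d₅ * z.1 + d₆ * z.2 ≠ 0 ∧
        (c₁ + c₂ * z.1 + c₃ * z.2) / (c₄ + c₅ * z.1 + c₆ * z.2)
          = (d₁ + d₂ * z.1 + d₃ * z.2) / (d₄ + d₅ * z.1 + d₆ * z.2)) ∧
      ((d₂ = 0 ∧ d₅ = 0) ∨ (d₃ = 0 ∧ d₆ = 0)) := by
  -- c₄ ≠ 0
  have hc4 : c₄ ≠ 0 := by
    have := hden (0,0) (by norm_num) (by norm_num)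
    simpa using this
  -- |c₁| < |c₄|
  have habs : ‖c₁‖ < ‖c₄‖ := by
    have h0 := hlt (0,0) (by norm_num) (by norm_num)
    simp only [norm_div] at h0
    have hpos : 0 < ‖c₄ + c₅ * (0,0).1 + c₆ * (0,0).2‖ := by
      simpa using hc4
    have := (div_lt_one hpos).mp h0
    simpa using this
  -- pointwise torus identity
  have key : ∀ z₁ z₂ : ℂ, ‖z₁‖ = 1 → ‖z₂‖ = 1 →
      c₄ + c₅ * z₁ + c₆ * z₂ ≠ 0 →
      (c₁ + c₂*z₁ + c₃*z₂) * (conj c₃ * z₁ + conj c₂ * z₂ + conj c₁ * (z₁*z₂))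
        = (c₄ + c₅*z₁ + c₆*z₂) * (conj c₆ * z₁ + conj c₅ * z₂ + conj c₄ * (z₁*z₂)) := by
    intro z₁ z₂ h1 h2 hq
    set p := c₁ + c₂*z₁ + c₃*z₂ with hp
    set q := c₄ + c₅*z₁ + c₆*z₂ with hq'
    have habspq : ‖p‖ = ‖q‖ := by
      have := hbd (z₁, z₂) h1 h2 hq
      rw [norm_div, div_eq_one_iff_eq (by simpa using hq)] at this
      simpa using this
    have hnsq : Complex.normSq p = Complex.normSq q := by
      rw [Complex.normSq_eq_norm_sq, Complex.normSq_eq_norm_sq, habspq]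
    have hpq : p * conj p = q * conj q := by
      rw [Complex.mul_conj, Complex.mul_conj, hnsq]
    have hz1 : z₁ * conj z₁ = 1 := by
      rw [Complex.mul_conj, Complex.normSq_eq_norm_sq, h1]; norm_num
    have hz2 : z₂ * conj z₂ = 1 := by
      rw [Complex.mul_conj, Complex.normSq_eq_norm_sq, h2]; norm_num
    have hcp : conj p = conj c₁ + conj c₂ * conj z₁ + conj c₃ * conj z₂ := by
      rw [hp]; simp [map_add, map_mul]
    have hcq : conj q = conj c₄ + conj c₅ * conj z₁ + conj c₆ * conj z₂ := by
      rw [hq']; simp [map_add, map_mul]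
    rw [hcp, hcq] at hpq
    linear_combination (z₁*z₂) * hpq
      + ((q * conj c₅ - p * conj c₂) * z₂) * hz1
      + ((q * conj c₆ - p * conj c₃) * z₁) * hz2
  -- step 1: for good z₂ all three z₁-coefficients vanish
  have step1 : ∀ z₂ : ℂ, ‖z₂‖ = 1 → (c₅ ≠ 0 ∨ c₄ + c₆ * z₂ ≠ 0) →
      ((c₂*conj c₃ - c₅*conj c₆) + (c₂*conj c₁ - c₅*conj c₄) * z₂ = 0) ∧
      ((c₁*conj c₃ - c₄*conj c₆)
        + (c₁*conj c₁ + c₂*conj c₂ + c₃*conj c₃ - c₄*conj c₄ - c₅*conj c₅ - c₆*conj c₆) * z₂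
        + (c₃*conj c₁ - c₆*conj c₄) * z₂^2 = 0) ∧
      ((c₁*conj c₂ - c₄*conj c₅) * z₂ + (c₃*conj c₂ - c₆*conj c₅) * z₂^2 = 0) := by
    intro z₂ h2 hgood
    obtain ⟨x, y, u, ax, ay, au, dxy, dxu, dyu, gx, gy, gu⟩ :=
      three_unit (fun z₁ => c₄ + c₅ * z₁ + c₆ * z₂ ≠ 0) (by
        intro z w hz hw
        rw [not_ne_iff] at hz hw
        by_contra hne
        have hc5 : c₅ = 0 := by
          have : c₅ * (z - w) = 0 := by linear_combination hz - hw
          exact (mul_eq_zero.mp this).resolve_right (sub_ne_zero.mpr hne)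
        rcases hgood with h | h
        · exact h hc5
        · exact h (by linear_combination hz - z * hc5))
    have ex := key x z₂ ax h2 gx
    have ey := key y z₂ ay h2 gy
    have eu := key u z₂ au h2 gu
    exact quad_eq_zero _ _ _ x y u dxy dxu dyu
      (by linear_combination ex) (by linear_combination ey) (by linear_combination eu)
  -- step 2: extract coefficients in z₂
  have goodtwo : ∀ z w : ℂ, ¬(c₅ ≠ 0 ∨ c₄ + c₆ * z ≠ 0) → ¬(c₅ ≠ 0 ∨ c₄ + c₆ * w ≠ 0) → z = w := by
    intro z w hz hw
    push_neg at hz hw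
    by_contra hne
    have hc6 : c₆ = 0 := by
      have : c₆ * (z - w) = 0 := by linear_combination hz.2 - hw.2
      exact (mul_eq_zero.mp this).resolve_right (sub_ne_zero.mpr hne)
    exact hc4 (by linear_combination hz.2 - z * hc6)
  obtain ⟨x, y, u, ax, ay, au, dxy, dxu, dyu, gx, gy, gu⟩ :=
    three_unit (fun z₂ => c₅ ≠ 0 ∨ c₄ + c₆ * z₂ ≠ 0) goodtwo
  have sx := step1 x ax gx
  have sy := step1 y ay gy
  have su := step1 u au gu
  -- equation A : c₂ conj c₁ = c₅ conj c₄
  have eqA : c₂ * conj c₁ - c₅ * conj c₄ = 0 := by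
    have := quad_eq_zero 0 (c₂*conj c₁ - c₅*conj c₄) (c₂*conj c₃ - c₅*conj c₆) x y u dxy dxu dyu
      (by linear_combination sx.1) (by linear_combination sy.1) (by linear_combination su.1)
    exact this.2.1
  -- equation B : c₃ conj c₁ = c₆ conj c₄
  have eqB : c₃ * conj c₁ - c₆ * conj c₄ = 0 := by
    have := quad_eq_zero (c₃*conj c₁ - c₆*conj c₄)
      (c₁*conj c₁ + c₂*conj c₂ + c₃*conj c₃ - c₄*conj c₄ - c₅*conj c₅ - c₆*conj c₆)
      (c₁*conj c₃ - c₄*conj c₆) x y u dxy dxu dyu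
      (by linear_combination sx.2.1) (by linear_combination sy.2.1) (by linear_combination su.2.1)
    exact this.1
  -- equation D : c₃ conj c₂ = c₆ conj c₅
  have eqD : c₃ * conj c₂ - c₆ * conj c₅ = 0 := by
    have := quad_eq_zero (c₃*conj c₂ - c₆*conj c₅) (c₁*conj c₂ - c₄*conj c₅) 0 x y u dxy dxu dyu
      (by linear_combination sx.2.2) (by linear_combination sy.2.2) (by linear_combination su.2.2)
    exact this.1
  -- conjugate of A
  have eqA' : c₁ * conj c₂ - c₄ * conj c₅ = 0 := by
    have := congrArg conj eqA
    simpa [map_sub, map_mul, mul_comm] using this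
  -- |c₁|² ≠ |c₄|²
  have hne : c₁ * conj c₁ - c₄ * conj c₄ ≠ 0 := by
    rw [Complex.mul_conj, Complex.mul_conj, sub_ne_zero]
    intro h
    have : Complex.normSq c₁ = Complex.normSq c₄ := by exact_mod_cast h
    rw [Complex.normSq_eq_norm_sq, Complex.normSq_eq_norm_sq] at this
    nlinarith [norm_nonneg c₁, norm_nonneg c₄]
  -- c₆ * conj c₅ = 0
  have h65 : c₆ * conj c₅ = 0 := by
    have hprod : c₆ * conj c₅ * (c₁ * conj c₁ - c₄ * conj c₄) = 0 := by
      linear_combination (-(c₁ * conj c₁)) * eqD + (c₁ * conj c₂) * eqB + (c₆ * conj c₄) * eqA'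
    exact (mul_eq_zero.mp hprod).resolve_right hne
  have hc1conj : ∀ w : ℂ, conj w = 0 → w = 0 := by
    intro w hw; simpa using congrArg conj hw
  refine ⟨c₁, c₂, c₃, c₄, c₅, c₆, fun z hz1 hz2 => ⟨hden z hz1 hz2, rfl⟩, ?_⟩
  rcases mul_eq_zero.mp h65 with h6 | h5'
  · -- c₆ = 0
    by_cases h3 : c₃ = 0
    · exact Or.inr ⟨h3, h6⟩
    · have hc1 : conj c₁ = 0 := by
        have : c₃ * conj c₁ = 0 := by linear_combination eqB + conj c₄ * h6
        exact (mul_eq_zero.mp this).resolve_left h3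
      have hc2 : conj c₂ = 0 := by
        have : c₃ * conj c₂ = 0 := by linear_combination eqD + conj c₅ * h6
        exact (mul_eq_zero.mp this).resolve_left h3
      have hc5 : c₅ = 0 := by
        have : c₅ * conj c₄ = 0 := by linear_combination -eqA + c₂ * hc1
        exact (mul_eq_zero.mp this).resolve_right (fun h => hc4 (hc1conj _ h))
      exact Or.inl ⟨hc1conj _ hc2, hc5⟩
  · -- conj c₅ = 0
    have h5 : c₅ = 0 := hc1conj _ h5'
    by_cases h2c : c₂ = 0
    · exact Or.inl ⟨h2c, h5⟩
    · have hc1 : conj c₁ = 0 := by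
        have : c₂ * conj c₁ = 0 := by linear_combination eqA + conj c₄ * h5
        exact (mul_eq_zero.mp this).resolve_left h2c
      have hc3 : c₃ = 0 := by
        have : c₃ * conj c₂ = 0 := by linear_combination eqD + c₆ * h5'
        exact (mul_eq_zero.mp this).resolve_right (fun h => h2c (hc1conj _ h))
      have hc6 : c₆ = 0 := by
        have : c₆ * conj c₄ = 0 := by linear_combination -eqB + c₃ * hc1
        exact (mul_eq_zero.mp this).resolve_right (fun h => hc4 (hc1conj _ h))
      exact Or.inr ⟨hc3, hc6⟩
end
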